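/- arXiv:2301.09450 — 5 statements merged into one kernel-verified Lean document; each statement's English description precedes it below -/
import Mathlib

section
/- Pointwise bound for the recursively defined valuation functions (Lemma 4.2): with ψ_t^n defined by ψ_T^n(z_{≤T}) = Σ_{s=1}^T x_s and ψ_t^n(z_{≤t}) = λ_t ∫ F^{-1}_{ψ^n_{t+1}(Z^n_{≤t+1}) | Z^n_{≤t}=z_{≤t}}(p) μ_t^1(dp) + (1-λ_t) ∫ F^{-1}_{-ψ^n_{t+1}(Z^n_{≤t+1}) | Z^n_{≤t}=z_{≤t}}(p) μ_t^2(dp), λ_t ∈ [0,1], μ_t^1, μ_t^2 ∈ P([0,1])', there exists a constant c ∈ (0,∞) such that |ψ_t^n(z)| ≤ c · E[|ψ^n_{t+1}(Z^n_{≤t+1})| | Z^n_{≤t} = z] for all z in the support of L(Z^n_{≤t}). -/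
/-!
The quantile function of a law `ν` pushes Lebesgue measure on `(0,1)` forward to `ν`, so
`∫₀¹ |F⁻¹(p)| dp = ∫ |w| dν`; this bounds `∫ F⁻¹ dμ` when `μ` has a bounded density. When `μ`
lives on `[a,b] ⊂ (0,1)`, Markov's inequality applied to both tails gives the pointwise bound
`|F⁻¹(p)| ≤ E|W| / p + E|W| / (1 - p)`. The law of `-W` has the same first absolute moment, so
both terms of `ψ` are controlled by `E|W|`.
-/

open MeasureTheory Set ProbabilityTheory

/-- The (left-continuous) quantile function of a distribution `ν` on `ℝ`. -/
noncomputable def qf (ν : MeasureTheory.Measure ℝ) (p : ℝ) : ℝ :=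
  sInf {x : ℝ | p ≤ (ν (Iic x)).toReal}

/-- The class `P([0,1])'` of probability measures on `[0,1]` that either have a
bounded Lebesgue density or are supported in some `[a,b] ⊂ (0,1)`. -/
def MemPP (μ : MeasureTheory.Measure ℝ) : Prop :=
  MeasureTheory.IsProbabilityMeasure μ ∧ μ (Icc (0:ℝ) 1)ᶜ = 0 ∧
    ((∃ (c' : ℝ) (w : ℝ → ℝ), (∀ p, 0 ≤ w p ∧ w p ≤ c') ∧
        μ = MeasureTheory.volume.withDensity fun p => ENNReal.ofReal (w p)) ∨
      ∃ a b : ℝ, 0 < a ∧ a < b ∧ b < 1 ∧ μ (Icc a b)ᶜ = 0)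

open scoped ENNReal NNReal

section Quantile

variable {ν : Measure ℝ}

lemma bddBelow_setOf_le_cdf {p : ℝ} (hp : 0 < p) : BddBelow {x : ℝ | p ≤ cdf ν x} := by
  obtain ⟨y, hy⟩ :=
    ((tendsto_cdf_atBot ν).eventually (eventually_lt_nhds hp)).exists_forall_of_atBot
  exact ⟨y, fun x hx => le_of_not_gt fun hxy => (hy x hxy.le).not_ge hx⟩

lemma nonempty_setOf_le_cdf {p : ℝ} (hp : p < 1) : {x : ℝ | p ≤ cdf ν x}.Nonempty :=
  let ⟨x, hx⟩ := ((tendsto_cdf_atTop ν).eventually (eventually_gt_nhds hp)).exists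
  ⟨x, hx.le⟩

variable [IsProbabilityMeasure ν]

lemma qf_eq_sInf_cdf (p : ℝ) : qf ν p = sInf {x : ℝ | p ≤ cdf ν x} := by
  simp only [qf, cdf_eq_real, measureReal_def]

-- For `p ≤ 0` the set defining `qf ν p` is unbounded below, so `qf ν p` is the junk value `0`.
lemma qf_le_iff_le_cdf {p : ℝ} (hp : p ∈ Ioo (0 : ℝ) 1) (t : ℝ) :
    qf ν p ≤ t ↔ p ≤ cdf ν t := by
  rw [qf_eq_sInf_cdf]
  refine ⟨fun h => ?_, fun h => csInf_le (bddBelow_setOf_le_cdf hp.1) h⟩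
  have hgt : ∀ x, t < x → p ≤ cdf ν x := fun x hx => by
    obtain ⟨y, hy, hyx⟩ := (csInf_lt_iff (bddBelow_setOf_le_cdf hp.1)
      (nonempty_setOf_le_cdf hp.2)).mp (h.trans_lt hx)
    exact hy.trans (monotone_cdf ν hyx.le)
  exact ge_of_tendsto (((cdf ν).right_continuous t).tendsto.mono_left
    (nhdsWithin_mono _ Ioi_subset_Ici_self))
    (eventually_nhdsWithin_of_forall hgt)

lemma le_cdf_qf {p : ℝ} (hp : p ∈ Ioo (0 : ℝ) 1) : p ≤ cdf ν (qf ν p) :=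
  (qf_le_iff_le_cdf hp _).mp le_rfl

lemma qf_monotoneOn : MonotoneOn (qf ν) (Ioo 0 1) := fun _ hp _ hq hpq =>
  (qf_le_iff_le_cdf hp _).mpr (hpq.trans (le_cdf_qf hq))

lemma aemeasurable_qf : AEMeasurable (qf ν) (volume.restrict (Ioo 0 1)) :=
  aemeasurable_restrict_of_monotoneOn measurableSet_Ioo qf_monotoneOn

lemma map_qf_volume_restrict_Ioo : (volume.restrict (Ioo 0 1)).map (qf ν) = ν := by
  refine (Measure.ext_of_Iic ν _ fun t => ?_).symm
  have hpre : qf ν ⁻¹' Iic t ∩ Ioo 0 1 = Iic (cdf ν t) ∩ Ioo 0 1 := by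
    ext p
    simp only [mem_inter_iff, mem_preimage, mem_Iic]
    exact and_congr_left (qf_le_iff_le_cdf · t)
  rw [Measure.map_apply_of_aemeasurable aemeasurable_qf measurableSet_Iic,
    Measure.restrict_apply' measurableSet_Ioo, hpre, ← Measure.restrict_apply' measurableSet_Ioo,
    Measure.restrict_congr_set Ioo_ae_eq_Ioc, Measure.restrict_apply measurableSet_Iic,
    Iic_inter_Ioc_of_le (cdf_le_one ν t), Real.volume_Ioc, sub_zero, ofReal_cdf]

lemma lintegral_abs_qf (hint : Integrable (fun w : ℝ => w) ν) :
    ∫⁻ p in Ioo 0 1, ENNReal.ofReal |qf ν p| = ENNReal.ofReal (∫ w, |w| ∂ν) := by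
  rw [ofReal_integral_eq_lintegral_ofReal hint.abs (ae_of_all _ fun w => abs_nonneg w)]
  conv_rhs => rw [← map_qf_volume_restrict_Ioo (ν := ν)]
  rw [lintegral_map' (by fun_prop) aemeasurable_qf]

lemma neg_mul_cdf_le_integral_abs (hint : Integrable (fun w : ℝ => w) ν) {y : ℝ} (hy : y ≤ 0) :
    -y * cdf ν y ≤ ∫ w, |w| ∂ν := by
  refine le_trans ?_ (mul_meas_ge_le_integral_of_nonneg (ae_of_all _ fun w => abs_nonneg w)
    hint.abs (-y))
  rw [cdf_eq_real]
  exact mul_le_mul_of_nonneg_left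
    (measureReal_mono fun w (hw : w ≤ y) => (neg_le_neg hw).trans (neg_le_abs w))
    (neg_nonneg.mpr hy)

lemma mul_one_sub_cdf_le_integral_abs (hint : Integrable (fun w : ℝ => w) ν) {x : ℝ}
    (hx : 0 ≤ x) :
    x * (1 - cdf ν x) ≤ ∫ w, |w| ∂ν := by
  refine le_trans ?_ (mul_meas_ge_le_integral_of_nonneg (ae_of_all _ fun w => abs_nonneg w)
    hint.abs x)
  rw [cdf_eq_real, ← probReal_univ (μ := ν), ← measureReal_compl measurableSet_Iic, compl_Iic]
  exact mul_le_mul_of_nonneg_left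
    (measureReal_mono fun w (hw : x < w) => hw.le.trans (le_abs_self w)) hx

lemma neg_div_le_qf (hint : Integrable (fun w : ℝ => w) ν) {p : ℝ} (hp : p ∈ Ioo (0 : ℝ) 1) :
    -((∫ w, |w| ∂ν) / p) ≤ qf ν p := by
  rcases le_or_gt 0 (qf ν p) with hq | hq
  · have : 0 < p := hp.1
    exact (neg_nonpos.mpr (by positivity)).trans hq
  rw [neg_le, le_div_iff₀ hp.1]
  calc -qf ν p * p ≤ -qf ν p * cdf ν (qf ν p) :=
        mul_le_mul_of_nonneg_left (le_cdf_qf hp) (by linarith)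
    _ ≤ ∫ w, |w| ∂ν := neg_mul_cdf_le_integral_abs hint hq.le

lemma qf_le_div (hint : Integrable (fun w : ℝ => w) ν) {p : ℝ} (hp : p ∈ Ioo (0 : ℝ) 1) :
    qf ν p ≤ (∫ w, |w| ∂ν) / (1 - p) := by
  have h1p : 0 < 1 - p := sub_pos.mpr hp.2
  refine le_of_forall_gt_imp_ge_of_dense fun x hx => (qf_le_iff_le_cdf hp x).mpr ?_
  have hx0 : 0 < x := lt_of_le_of_lt (by positivity) hx
  rw [div_lt_iff₀ h1p] at hx
  by_contra! hcdf
  have := mul_lt_mul_of_pos_left (by linarith : 1 - p < 1 - cdf ν x) hx0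
  linarith [mul_one_sub_cdf_le_integral_abs hint hx0.le]

lemma abs_qf_le (hint : Integrable (fun w : ℝ => w) ν) {p : ℝ} (hp : p ∈ Ioo (0 : ℝ) 1) :
    |qf ν p| ≤ (∫ w, |w| ∂ν) / p + (∫ w, |w| ∂ν) / (1 - p) := by
  have hI : 0 ≤ ∫ w, |w| ∂ν := integral_nonneg fun w => abs_nonneg w
  have := div_nonneg hI hp.1.le
  have := div_nonneg hI (sub_pos.mpr hp.2).le
  exact abs_le.mpr ⟨by linarith [neg_div_le_qf hint hp], by linarith [qf_le_div hint hp]⟩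

end Quantile

section Integral

variable {μ ν : Measure ℝ} [IsProbabilityMeasure ν]

lemma abs_integral_qf_le_of_ae_mem_Icc [IsProbabilityMeasure μ] {a b : ℝ} (ha : 0 < a)
    (hb : b < 1) (hμ : ∀ᵐ p ∂μ, p ∈ Icc a b) (hint : Integrable (fun w : ℝ => w) ν) :
    |∫ p, qf ν p ∂μ| ≤ (1 / a + 1 / (1 - b)) * ∫ w, |w| ∂ν := by
  have hI : 0 ≤ ∫ w, |w| ∂ν := integral_nonneg fun w => abs_nonneg w
  have hbound : ∀ᵐ p ∂μ, ‖qf ν p‖ ≤ (1 / a + 1 / (1 - b)) * ∫ w, |w| ∂ν := by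
    filter_upwards [hμ] with p ⟨hap, hpb⟩
    have hp : p ∈ Ioo (0 : ℝ) 1 := ⟨ha.trans_le hap, hpb.trans_lt hb⟩
    calc ‖qf ν p‖ ≤ (∫ w, |w| ∂ν) / p + (∫ w, |w| ∂ν) / (1 - p) := abs_qf_le hint hp
      _ ≤ (∫ w, |w| ∂ν) / a + (∫ w, |w| ∂ν) / (1 - b) := by gcongr
      _ = (1 / a + 1 / (1 - b)) * ∫ w, |w| ∂ν := by ring
  simpa using norm_integral_le_of_norm_le_const hbound

lemma abs_integral_qf_le_of_le_smul_volume {c : ℝ≥0}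
    (hμ : μ ≤ (c : ℝ≥0∞) • volume.restrict (Ioo 0 1)) (hint : Integrable (fun w : ℝ => w) ν) :
    |∫ p, qf ν p ∂μ| ≤ c * ∫ w, |w| ∂ν := by
  have hlint : ∫⁻ p, ENNReal.ofReal ‖qf ν p‖ ∂μ ≤ c * ENNReal.ofReal (∫ w, |w| ∂ν) :=
    calc ∫⁻ p, ENNReal.ofReal ‖qf ν p‖ ∂μ
        ≤ ∫⁻ p, ENNReal.ofReal |qf ν p| ∂((c : ℝ≥0∞) • volume.restrict (Ioo 0 1)) :=
          lintegral_mono' hμ le_rfl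
      _ = c * ENNReal.ofReal (∫ w, |w| ∂ν) := by
          rw [lintegral_smul_measure, smul_eq_mul, lintegral_abs_qf hint]
  calc |∫ p, qf ν p ∂μ| ≤ (∫⁻ p, ENNReal.ofReal ‖qf ν p‖ ∂μ).toReal :=
        (Real.norm_eq_abs _).ge.trans (norm_integral_le_lintegral_norm _)
    _ ≤ (c * ENNReal.ofReal (∫ w, |w| ∂ν)).toReal :=
        ENNReal.toReal_mono (by finiteness) hlint
    _ = c * ∫ w, |w| ∂ν := by
        rw [ENNReal.toReal_mul, ENNReal.coe_toReal,
          ENNReal.toReal_ofReal (integral_nonneg fun w => abs_nonneg w)]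

end Integral

lemma withDensity_le_smul_volume_restrict_Ioo {μ : Measure ℝ} {f : ℝ → ℝ≥0∞} {c : ℝ≥0∞}
    (hf : ∀ p, f p ≤ c) (hμ : μ = volume.withDensity f) (hsupp : μ (Icc (0 : ℝ) 1)ᶜ = 0) :
    μ ≤ c • volume.restrict (Ioo 0 1) :=
  calc μ = μ.restrict (Icc 0 1) := (Measure.restrict_eq_self_of_ae_mem hsupp).symm
    _ = (volume.restrict (Icc 0 1)).withDensity f := by
        rw [hμ, restrict_withDensity measurableSet_Icc]
    _ ≤ (volume.restrict (Icc 0 1)).withDensity fun _ => c := withDensity_mono (ae_of_all _ hf)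
    _ = c • volume.restrict (Ioo 0 1) := by
        rw [withDensity_const, Measure.restrict_congr_set Ioo_ae_eq_Icc]

lemma MemPP.exists_abs_integral_qf_le {μ : Measure ℝ} (h : MemPP μ) :
    ∃ c : ℝ, 0 < c ∧ ∀ (ν : Measure ℝ) [IsProbabilityMeasure ν],
      Integrable (fun w : ℝ => w) ν → |∫ p, qf ν p ∂μ| ≤ c * ∫ w, |w| ∂ν := by
  obtain ⟨_, hsupp, ⟨c, w, hw, hμ⟩ | ⟨a, b, ha, -, hb, hsupp'⟩⟩ := h
  · have hc : 0 ≤ c := (hw 0).1.trans (hw 0).2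
    have hμc : μ ≤ (c.toNNReal : ℝ≥0∞) • volume.restrict (Ioo 0 1) :=
      withDensity_le_smul_volume_restrict_Ioo (fun p => ENNReal.ofReal_le_ofReal (hw p).2)
        hμ hsupp
    refine ⟨c + 1, by linarith, fun ν _ hint => ?_⟩
    have := abs_integral_qf_le_of_le_smul_volume hμc hint
    rw [Real.coe_toNNReal c hc] at this
    exact this.trans (by gcongr; linarith)
  · refine ⟨1 / a + 1 / (1 - b), by have := sub_pos.mpr hb; positivity, fun ν _ hint => ?_⟩
    exact abs_integral_qf_le_of_ae_mem_Icc ha hb hsupp' hint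

lemma integral_abs_map_neg (ν : Measure ℝ) :
    ∫ w, |w| ∂(ν.map fun w => -w) = ∫ w, |w| ∂ν := by
  rw [integral_map measurable_neg.aemeasurable continuous_abs.aestronglyMeasurable]
  simp only [abs_neg]

lemma integrable_id_map_neg {ν : Measure ℝ} (hint : Integrable (fun w : ℝ => w) ν) :
    Integrable (fun w : ℝ => w) (ν.map fun w => -w) :=
  (integrable_map_measure aestronglyMeasurable_id measurable_neg.aemeasurable).mpr hint.neg

theorem stmt_10_general {E : Type*} [MeasurableSpace E] (κ : Kernel E ℝ)
    (lam : ℝ)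
    (μ1 μ2 : Measure ℝ) (h1 : MemPP μ1) (h2 : MemPP μ2) :
    ∃ c : ℝ, 0 < c ∧ ∀ z : E, IsProbabilityMeasure (κ z) →
      Integrable (fun w : ℝ => w) (κ z) →
      |lam * ∫ p, qf (κ z) p ∂μ1
          + (1 - lam) * ∫ p, qf ((κ z).map fun w => -w) p ∂μ2|
        ≤ c * ∫ w, |w| ∂(κ z) := by
  obtain ⟨c1, hc1, hμ1⟩ := h1.exists_abs_integral_qf_le
  obtain ⟨c2, hc2, hμ2⟩ := h2.exists_abs_integral_qf_le
  have hlam : 0 < |lam| + |1 - lam| := by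
    have := abs_add_le lam (1 - lam)
    rw [add_sub_cancel, abs_one] at this
    linarith
  refine ⟨(|lam| + |1 - lam|) * max c1 c2, by positivity, fun z _ hint => ?_⟩
  have := Measure.isProbabilityMeasure_map (μ := κ z) measurable_neg.aemeasurable
  set I := ∫ w, |w| ∂(κ z)
  set A := ∫ p, qf (κ z) p ∂μ1
  set B := ∫ p, qf ((κ z).map fun w => -w) p ∂μ2
  have hI : 0 ≤ I := integral_nonneg fun w => abs_nonneg w
  have hA : |A| ≤ max c1 c2 * I :=
    (hμ1 _ hint).trans (mul_le_mul_of_nonneg_right (le_max_left _ _) hI)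
  have hB : |B| ≤ max c1 c2 * I := by
    refine (hμ2 _ (integrable_id_map_neg hint)).trans ?_
    rw [integral_abs_map_neg]
    exact mul_le_mul_of_nonneg_right (le_max_right _ _) hI
  calc |lam * A + (1 - lam) * B| ≤ |lam| * |A| + |1 - lam| * |B| := by
        simpa only [abs_mul] using abs_add_le (lam * A) ((1 - lam) * B)
    _ ≤ |lam| * (max c1 c2 * I) + |1 - lam| * (max c1 c2 * I) := by gcongr
    _ = (|lam| + |1 - lam|) * max c1 c2 * I := by ring

/-- Pointwise bound for the recursively defined valuation functions: if
`ψ(z) = λ ∫ F⁻¹_{W|Z=z}(p) μ¹(dp) + (1-λ) ∫ F⁻¹_{-W|Z=z}(p) μ²(dp)` with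
`λ ∈ [0,1]` and `μ¹, μ² ∈ P([0,1])'`, where the conditional law of `W` given
`Z = z` is the kernel `κ z`, then there is a constant `c ∈ (0,∞)` with
`|ψ(z)| ≤ c · E[|W| | Z = z]` for all relevant `z`. -/
theorem stmt_10 {E : Type*} [MeasurableSpace E] (κ : Kernel E ℝ)
    (lam : ℝ) (hlam0 : 0 ≤ lam) (hlam1 : lam ≤ 1)
    (μ1 μ2 : Measure ℝ) (h1 : MemPP μ1) (h2 : MemPP μ2) :
    ∃ c : ℝ, 0 < c ∧ ∀ z : E, IsProbabilityMeasure (κ z) →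
      Integrable (fun w : ℝ => w) (κ z) →
      |lam * ∫ p, qf (κ z) p ∂μ1
          + (1 - lam) * ∫ p, qf ((κ z).map fun w => -w) p ∂μ2|
        ≤ c * ∫ w, |w| ∂(κ z) :=
  stmt_10_general κ lam μ1 μ2 h1 h2
end

section
/- Bound for the limited-liability valuation recursion (Lemma 4.5): let ν(z) = ∫ F^{-1}_{-W | Z=z}(p) μ(dp) and ψ(z) = ν(z) - γ · E[((ν(z) - W)^+)^β | Z = z]^{1/β}, with γ ≥ 0, β ∈ (0,1], and μ satisfying |∫ F^{-1}_{-W|Z=z}(p) μ(dp)| ≤ c' E[|W| | Z = z]. Then |ψ(z)| ≤ (c' + γ(c'+1)) · E[|W| | Z = z]. -/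
open MeasureTheory Set ProbabilityTheory

/-- Bound for the limited-liability valuation recursion: with
`ν(z) = ∫ F⁻¹_{-W|Z=z}(p) μ(dp)`,
`ψ(z) = ν(z) - γ · E[((ν(z) - W)⁺)^β | Z = z]^{1/β}`, `γ ≥ 0`, `β ∈ (0,1]`, and
`|ν(z)| ≤ c'· E[|W| | Z = z]`, one has `|ψ(z)| ≤ (c' + γ(c'+1)) · E[|W| | Z = z]`.
The conditional law of `W` given `Z = z` is the kernel `κ z`. -/
theorem stmt_11 {E : Type*} [MeasurableSpace E] (κ : Kernel E ℝ) [IsMarkovKernel κ]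
    (μ : Measure ℝ) [IsProbabilityMeasure μ]
    (γ β c' : ℝ) (hγ : 0 ≤ γ) (hβ0 : 0 < β) (hβ1 : β ≤ 1) (hc' : 0 ≤ c')
    (ν : E → ℝ) (hν : ∀ z, ν z = ∫ p, qf ((κ z).map fun w => -w) p ∂μ)
    (hbound : ∀ z, |ν z| ≤ c' * ∫ w, |w| ∂(κ z))
    (ψ : E → ℝ)
    (hψ : ∀ z, ψ z = ν z - γ * (∫ w, (max (ν z - w) 0) ^ β ∂(κ z)) ^ (1 / β)) :
    ∀ z : E, Integrable (fun w : ℝ => w) (κ z) →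
      |ψ z| ≤ (c' + γ * (c' + 1)) * ∫ w, |w| ∂(κ z) := by
  intro z hW
  have hPM : IsProbabilityMeasure (κ z) := inferInstance
  set M : ℝ := ∫ w, |w| ∂(κ z) with hM
  have hM0 : 0 ≤ M := integral_nonneg fun w => abs_nonneg w
  set f : ℝ → ℝ := fun w => max (ν z - w) 0 with hfdef
  have hf0 : ∀ w, 0 ≤ f w := fun w => le_max_right _ _
  -- integrability facts
  have hfint : Integrable f (κ z) := ((integrable_const (ν z)).sub hW).pos_part
  have hgcont : Continuous fun x : ℝ => x ^ β :=
    continuous_iff_continuousAt.mpr fun x =>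
      Real.continuousAt_rpow_const x β (Or.inr hβ0.le)
  have hfcont : Continuous f := (continuous_const.sub continuous_id).max continuous_const
  have hgfmeas : AEStronglyMeasurable (fun w => f w ^ β) (κ z) :=
    (hgcont.comp hfcont).aestronglyMeasurable
  have hgfint : Integrable (fun w => f w ^ β) (κ z) := by
    refine Integrable.mono ((integrable_const (1:ℝ)).add hfint) hgfmeas ?_
    filter_upwards with w
    have h1 : f w ^ β ≤ 1 + f w := by
      rcases le_total (f w) 1 with h | h
      · have := Real.rpow_le_one (hf0 w) h hβ0.le
        nlinarith [hf0 w]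
      · calc f w ^ β ≤ f w ^ (1:ℝ) := Real.rpow_le_rpow_of_exponent_le h hβ1
          _ = f w := Real.rpow_one _
          _ ≤ 1 + f w := by linarith
    have h0 : 0 ≤ f w ^ β := Real.rpow_nonneg (hf0 w) β
    rw [Real.norm_eq_abs, Real.norm_eq_abs, abs_of_nonneg h0]
    exact h1.trans (le_abs_self _)
  -- Jensen's inequality : ∫ f^β ≤ (∫ f)^β
  set I : ℝ := ∫ w, f w ^ β ∂(κ z) with hI
  set A : ℝ := ∫ w, f w ∂(κ z) with hA
  have hA0 : 0 ≤ A := integral_nonneg hf0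
  have hI0 : 0 ≤ I := integral_nonneg fun w => Real.rpow_nonneg (hf0 w) β
  have hjensen : I ≤ A ^ β := by
    have := ConcaveOn.le_map_integral (μ := κ z) (f := f)
      (Real.concaveOn_rpow hβ0.le hβ1)
      (fun x _ => (Real.continuousAt_rpow_const x β (Or.inr hβ0.le)).continuousWithinAt)
      isClosed_Ici (Filter.Eventually.of_forall fun w => hf0 w) hfint hgfint
    exact this
  -- A ≤ (c'+1) * M
  have hAle : A ≤ (c' + 1) * M := by
    have hmono : A ≤ ∫ w, |ν z| + |w| ∂(κ z) := by
      refine integral_mono hfint ((integrable_const _).add hW.abs) fun w => ?_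
      have : ν z - w ≤ |ν z| + |w| := by
        have := abs_sub_abs_le_abs_sub (ν z) w
        have h1 := le_abs_self (ν z)
        have h2 := neg_abs_le w
        linarith
      exact max_le this (by positivity)
    have : ∫ w, |ν z| + |w| ∂(κ z) = |ν z| + M := by
      rw [integral_add (integrable_const _) hW.abs, integral_const]
      simp [hM]
    rw [this] at hmono
    have := hbound z
    nlinarith
  -- I^(1/β) ≤ A ≤ (c'+1) M
  have hT : I ^ (1/β) ≤ (c' + 1) * M := by
    calc I ^ (1/β) ≤ (A ^ β) ^ (1/β) :=
          Real.rpow_le_rpow hI0 hjensen (by positivity)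
      _ = A := by rw [one_div, Real.rpow_rpow_inv hA0 hβ0.ne']
      _ ≤ (c' + 1) * M := hAle
  have hT0 : 0 ≤ I ^ (1/β) := Real.rpow_nonneg hI0 _
  have hb := hbound z
  rw [hψ z]
  have habs : |ν z - γ * I ^ (1/β)| ≤ |ν z| + γ * I ^ (1/β) := by
    have h : |ν z - γ * I ^ (1/β)| ≤ |ν z| + |γ * I ^ (1/β)| := abs_sub _ _
    rwa [abs_of_nonneg (mul_nonneg hγ hT0)] at h
  have hγT : γ * I ^ (1/β) ≤ γ * ((c' + 1) * M) := by nlinarith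
  calc |ν z - γ * I ^ (1/β)| ≤ |ν z| + γ * I ^ (1/β) := habs
    _ ≤ c' * M + γ * ((c' + 1) * M) := add_le_add hb hγT
    _ = (c' + γ * (c' + 1)) * M := by ring
end

section
/- Uniform integrability is preserved by conditional expectation onto a finer σ-algebra along converging conditioning points (Lemma 4.4): Suppose L(W^n | Z^n_{≤s} = z^n_{≤s}) converges weakly to L(W | Z_{≤s} = z_{≤s}) as n → ∞, the family (L(W^n | Z^n_{≤s} = z^n_{≤s}))_n is uniformly integrable, and W^n ≥ 0. If W̃^n = E[W^n | Z^n_{≤t}] for s < t, then the family (L(W̃^n | Z^n_{≤s} = z^n_{≤s}))_n is uniformly integrable. -/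
/-!
On the superlevel set `S = {r ≤ W̃}`, which is `σ(Z_{≤t})`-measurable, the tower property gives
`∫_S W̃ = ∫_S W`. Splitting `W` at the level `q = √r`,
`∫_S W ≤ ∫_{q ≤ W} W + q · P(S)`, and Markov's inequality gives `P(S) ≤ E[W̃] / r = E[W] / r`.
Hence the tail integral of `W̃` at level `r` is at most that of `W` at level `√r` plus
`sup_n E[Wⁿ] / √r`, and both terms vanish as `r → ∞`.
-/

open MeasureTheory Filter Set

namespace MeasureTheory

variable {Ω : Type*} [mΩ : MeasurableSpace Ω] {μ : Measure Ω} {f : Ω → ℝ}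

lemma integral_le_setIntegral_superlevel_add [IsProbabilityMeasure μ] (hf : Integrable f μ)
    (hfm : Measurable f) {r : ℝ} (hr : 0 ≤ r) :
    ∫ ω, f ω ∂μ ≤ ∫ ω in {ω | r ≤ f ω}, f ω ∂μ + r := by
  have hS : MeasurableSet {ω | r ≤ f ω} := measurableSet_le measurable_const hfm
  rw [← integral_add_compl hS hf]
  gcongr
  calc ∫ ω in {ω | r ≤ f ω}ᶜ, f ω ∂μ ≤ ∫ _ in {ω | r ≤ f ω}ᶜ, r ∂μ :=
        setIntegral_mono_on hf.integrableOn integrableOn_const hS.compl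
          fun ω (hω : ¬ r ≤ f ω) => (not_le.1 hω).le
    _ = μ.real {ω | r ≤ f ω}ᶜ * r := by rw [setIntegral_const, smul_eq_mul]
    _ ≤ r := mul_le_of_le_one_left hr measureReal_le_one

lemma setIntegral_le_setIntegral_superlevel_add [IsFiniteMeasure μ] (hf0 : 0 ≤ᵐ[μ] f) (hf : Integrable f μ)
    (hfm : Measurable f) {s : Set Ω} (hs : MeasurableSet s) {q : ℝ} (hq : 0 ≤ q) :
    ∫ ω in s, f ω ∂μ ≤ ∫ ω in {ω | q ≤ f ω}, f ω ∂μ + q * μ.real s := by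
  set A := {ω | q ≤ f ω}
  have hA : MeasurableSet A := measurableSet_le measurable_const hfm
  rw [← integral_add_compl hA hf.restrict, Measure.restrict_restrict hA,
    Measure.restrict_restrict hA.compl]
  gcongr ?_ + ?_
  · exact setIntegral_mono_set hf.integrableOn (ae_restrict_of_ae hf0)
      inter_subset_left.eventuallyLE
  · calc ∫ ω in Aᶜ ∩ s, f ω ∂μ ≤ ∫ _ in Aᶜ ∩ s, q ∂μ :=
          setIntegral_mono_on hf.integrableOn integrableOn_const (hA.compl.inter hs)
            fun ω hω => (not_le.1 (show ¬ q ≤ f ω from hω.1)).le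
      _ = q * μ.real (Aᶜ ∩ s) := by rw [setIntegral_const, smul_eq_mul, mul_comm]
      _ ≤ q * μ.real s :=
          mul_le_mul_of_nonneg_left (measureReal_mono inter_subset_right) hq

lemma setIntegral_superlevel_condExp_le [IsFiniteMeasure μ] (hf0 : 0 ≤ᵐ[μ] f)
    (hf : Integrable f μ) (hfm : Measurable f) {m : MeasurableSpace Ω} (hm : m ≤ mΩ)
    {r q : ℝ} (hr : 0 < r) (hq : 0 ≤ q) :
    ∫ ω in {ω | r ≤ μ[f|m] ω}, μ[f|m] ω ∂μ
      ≤ ∫ ω in {ω | q ≤ f ω}, f ω ∂μ + q * (∫ ω, f ω ∂μ) / r := by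
  have hS : MeasurableSet[m] {ω | r ≤ μ[f|m] ω} :=
    measurableSet_le measurable_const stronglyMeasurable_condExp.measurable
  have hmarkov : μ.real {ω | r ≤ μ[f|m] ω} ≤ (∫ ω, f ω ∂μ) / r := by
    rw [le_div_iff₀' hr, ← integral_condExp hm]
    exact mul_meas_ge_le_integral_of_nonneg (condExp_nonneg hf0) integrable_condExp r
  calc ∫ ω in {ω | r ≤ μ[f|m] ω}, μ[f|m] ω ∂μ = ∫ ω in {ω | r ≤ μ[f|m] ω}, f ω ∂μ :=
        setIntegral_condExp hm hf hS
    _ ≤ ∫ ω in {ω | q ≤ f ω}, f ω ∂μ + q * μ.real {ω | r ≤ μ[f|m] ω} :=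
        setIntegral_le_setIntegral_superlevel_add (mΩ := mΩ) hf0 hf hfm (hm _ hS) hq
    _ ≤ ∫ ω in {ω | q ≤ f ω}, f ω ∂μ + q * (∫ ω, f ω ∂μ) / r := by
        rw [mul_div_assoc]; gcongr

end MeasureTheory

section SupTailIntegral

variable {ι Ω : Type*} [mΩ : MeasurableSpace Ω] {μ : ι → Measure Ω} {f : ι → Ω → ℝ}

/-- Uniform integrability of the family `f` is `supTailIntegral μ f → 0` at infinity. -/
noncomputable def supTailIntegral (μ : ι → Measure Ω) (f : ι → Ω → ℝ) (r : ℝ) : ℝ :=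
  ⨆ i, ∫ ω in {ω | r ≤ f i ω}, f i ω ∂μ i

lemma supTailIntegral_nonneg (hf0 : ∀ i, 0 ≤ᵐ[μ i] f i) (r : ℝ) :
    0 ≤ supTailIntegral μ f r :=
  Real.iSup_nonneg fun i => setIntegral_nonneg_of_ae (hf0 i)

lemma supTailIntegral_eq_zero_of_not_bddAbove [∀ i, IsProbabilityMeasure (μ i)]
    (hf : ∀ i, Integrable (f i) (μ i)) (hfm : ∀ i, Measurable (f i))
    (hunbdd : ¬ BddAbove (range fun i => ∫ ω, f i ω ∂μ i)) {r : ℝ} (hr : 0 ≤ r) :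
    supTailIntegral μ f r = 0 := by
  refine Real.iSup_of_not_bddAbove fun ⟨B, hB⟩ => hunbdd ⟨B + r, ?_⟩
  rintro _ ⟨i, rfl⟩
  calc ∫ ω, f i ω ∂μ i ≤ ∫ ω in {ω | r ≤ f i ω}, f i ω ∂μ i + r :=
        integral_le_setIntegral_superlevel_add (hf i) (hfm i) hr
    _ ≤ B + r := by gcongr; exact hB ⟨i, rfl⟩

lemma supTailIntegral_condExp_le [Nonempty ι] [∀ i, IsFiniteMeasure (μ i)]
    {m : ι → MeasurableSpace Ω} (hm : ∀ i, m i ≤ mΩ) (hf0 : ∀ i, 0 ≤ᵐ[μ i] f i)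
    (hf : ∀ i, Integrable (f i) (μ i)) (hfm : ∀ i, Measurable (f i)) {C : ℝ}
    (hC : ∀ i, ∫ ω, f i ω ∂μ i ≤ C) {r : ℝ} (hr : 0 < r) :
    supTailIntegral μ (fun i => (μ i)[f i|m i]) r
      ≤ supTailIntegral μ f (√r) + C / √r := by
  have hbdd : BddAbove (range fun i => ∫ ω in {ω | √r ≤ f i ω}, f i ω ∂μ i) :=
    ⟨C, by
      rintro _ ⟨i, rfl⟩
      exact (setIntegral_le_integral (hf i) (hf0 i)).trans (hC i)⟩
  refine ciSup_le fun i => ?_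
  calc ∫ ω in {ω | r ≤ (μ i)[f i|m i] ω}, (μ i)[f i|m i] ω ∂μ i
      ≤ ∫ ω in {ω | √r ≤ f i ω}, f i ω ∂μ i + √r * (∫ ω, f i ω ∂μ i) / r :=
        setIntegral_superlevel_condExp_le (hf0 i) (hf i) (hfm i) (hm i) hr (Real.sqrt_nonneg r)
    _ ≤ supTailIntegral μ f (√r) + √r * C / r := by
        gcongr
        · exact le_ciSup hbdd i
        · exact hC i
    _ = supTailIntegral μ f (√r) + C / √r := by
        rw [mul_comm, mul_div_assoc, Real.sqrt_div_self', mul_one_div]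

end SupTailIntegral

theorem stmt_12_general {Ω : Type*} (m : ℕ → MeasurableSpace Ω) [mΩ : MeasurableSpace Ω]
    (P : ℕ → Measure Ω) (hP : ∀ n, IsProbabilityMeasure (P n))
    (hm : ∀ n, m n ≤ mΩ)
    (W : ℕ → Ω → ℝ) (hWmeas : ∀ n, Measurable (W n))
    (hW0 : ∀ n, 0 ≤ᵐ[P n] W n) (hWint : ∀ n, Integrable (W n) (P n))
    -- uniform integrability of the (conditional) laws of Wⁿ
    (hui : Tendsto (fun r : ℝ => ⨆ n, ∫ ω in {ω | r ≤ W n ω}, W n ω ∂P n)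
      atTop (nhds 0)) :
    -- uniform integrability of the (conditional) laws of W̃ⁿ = E[Wⁿ | m n]
    Tendsto (fun r : ℝ => ⨆ n,
        ∫ ω in {ω | r ≤ ((P n)[W n|m n]) ω}, ((P n)[W n|m n]) ω ∂P n)
      atTop (nhds 0) := by
  change Tendsto (supTailIntegral P W) atTop (nhds 0) at hui
  change Tendsto (supTailIntegral P fun n => (P n)[W n|m n]) atTop (nhds 0)
  by_cases hbdd : BddAbove (range fun n => ∫ ω, W n ω ∂P n)
  · obtain ⟨C, hC⟩ := hbdd
    have hbound : Tendsto (fun r => supTailIntegral P W (√r) + C / √r) atTop (nhds 0) := by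
      simpa using (hui.comp Real.tendsto_sqrt_atTop).add
        (tendsto_const_nhds.div_atTop Real.tendsto_sqrt_atTop)
    refine tendsto_of_tendsto_of_tendsto_of_le_of_le' tendsto_const_nhds hbound
      (Eventually.of_forall (supTailIntegral_nonneg fun n => condExp_nonneg (hW0 n))) ?_
    filter_upwards [eventually_gt_atTop 0] with r hr
    exact supTailIntegral_condExp_le hm hW0 hWint hWmeas (fun n => hC ⟨n, rfl⟩) hr
  -- `⨆` of an unbounded real family is `0`, so with unbounded means both tail suprema vanish.
  · have hunbdd : ¬ BddAbove (range fun n => ∫ ω, (P n)[W n|m n] ω ∂P n) := by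
      simpa only [integral_condExp (hm _)] using hbdd
    refine tendsto_const_nhds.congr' ?_
    filter_upwards [eventually_ge_atTop 0] with r hr
    exact (supTailIntegral_eq_zero_of_not_bddAbove (fun n => integrable_condExp)
      (fun n => (stronglyMeasurable_condExp.mono (hm n)).measurable) hunbdd hr).symm

/-- Uniform integrability is preserved by conditional expectation onto a finer
σ-algebra along converging conditioning points: here `P n` plays the role of the
conditional law given `Z^n_{≤s} = z^n_{≤s}`, `m n = σ(Z^n_{≤t})` with `s < t`,
and `W̃^n = E[W^n | m n]`. If the laws of `W^n` converge weakly to a limit law and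
are uniformly integrable, then the laws of `W̃^n` are uniformly integrable. -/
theorem stmt_12 {Ω : Type*} (m : ℕ → MeasurableSpace Ω) [mΩ : MeasurableSpace Ω]
    (P : ℕ → Measure Ω) (hP : ∀ n, IsProbabilityMeasure (P n))
    (hm : ∀ n, m n ≤ mΩ)
    (W : ℕ → Ω → ℝ) (hWmeas : ∀ n, Measurable (W n))
    (hW0 : ∀ n, 0 ≤ᵐ[P n] W n) (hWint : ∀ n, Integrable (W n) (P n))
    (ν : Measure ℝ) (hν : IsProbabilityMeasure ν)
    -- weak convergence of the (conditional) laws of Wⁿ to ν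
    (hweak : ∀ f : BoundedContinuousFunction ℝ ℝ,
      Tendsto (fun n => ∫ ω, f (W n ω) ∂P n) atTop (nhds (∫ x, f x ∂ν)))
    -- uniform integrability of the (conditional) laws of Wⁿ
    (hui : Tendsto (fun r : ℝ => ⨆ n, ∫ ω in {ω | r ≤ W n ω}, W n ω ∂P n)
      atTop (nhds 0)) :
    -- uniform integrability of the (conditional) laws of W̃ⁿ = E[Wⁿ | m n]
    Tendsto (fun r : ℝ => ⨆ n,
        ∫ ω in {ω | r ≤ ((P n)[W n|m n]) ω}, ((P n)[W n|m n]) ω ∂P n)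
      atTop (nhds 0) :=
  stmt_12_general m (mΩ := mΩ) P hP hm W hWmeas hW0 hWint hui
end

section
/- Concave optimization over a majorization-type polytope (Lemma 4.6): let c ∈ ℝ^T_+ with Σ_{t=1}^T c_t = 1 and c_1 ≥ c_2 ≥ ... ≥ c_T. Then c maximizes d ↦ Σ_{t=1}^T d_t^{1/2} over the set D = {d ∈ ℝ^T_+ : Σ_{t=1}^T d_t = 1, Σ_{s=1}^t d_s ≥ Σ_{s=1}^t c_s for all t = 1,...,T}. -/
open Finset

lemma sqrt_tangent_aux {a x : ℝ} (ha : 0 < a) (hx : 0 ≤ x) :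
    Real.sqrt x - Real.sqrt a ≤ (2 * Real.sqrt a)⁻¹ * (x - a) := by
  have hsa : 0 < Real.sqrt a := Real.sqrt_pos.2 ha
  have h1 : Real.sqrt x ^ 2 = x := Real.sq_sqrt hx
  have h2 : Real.sqrt a ^ 2 = a := Real.sq_sqrt ha.le
  have key : 2 * Real.sqrt a * (Real.sqrt x - Real.sqrt a) ≤ x - a := by
    nlinarith [sq_nonneg (Real.sqrt x - Real.sqrt a)]
  calc Real.sqrt x - Real.sqrt a
      = (2 * Real.sqrt a)⁻¹ * (2 * Real.sqrt a * (Real.sqrt x - Real.sqrt a)) := by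
        field_simp
    _ ≤ (2 * Real.sqrt a)⁻¹ * (x - a) :=
        mul_le_mul_of_nonneg_left key (by positivity)

lemma sum_filter_le_eq_range {T : ℕ} (f : Fin T → ℝ) (t : Fin T) :
    ∑ s ∈ Finset.univ.filter (· ≤ t), f s
      = ∑ n ∈ Finset.range (t.1 + 1), (if h : n < T then f ⟨n, h⟩ else 0) := by
  rw [Finset.sum_filter]
  have base := Fin.sum_univ_eq_sum_range
    (fun n => if h : n < T then (if (⟨n, h⟩ : Fin T) ≤ t then f ⟨n, h⟩ else 0) else 0) T
  have lhs_eq : (∑ a : Fin T, if a ≤ t then f a else 0)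
      = ∑ i : Fin T,
        (fun n => if h : n < T then (if (⟨n, h⟩ : Fin T) ≤ t then f ⟨n, h⟩ else 0) else 0) ↑i := by
    apply Finset.sum_congr rfl
    intro i _
    simp only [dif_pos i.2, Fin.eta]
  rw [lhs_eq, base]
  have hsub : Finset.range (t.1 + 1) ⊆ Finset.range T := by
    intro n hn
    simp only [Finset.mem_range] at *
    omega
  rw [← Finset.sum_subset hsub]
  · apply Finset.sum_congr rfl
    intro n hn
    simp only [Finset.mem_range] at hn
    have hnT : n < T := by omega
    rw [dif_pos hnT, dif_pos hnT, if_pos]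
    exact Fin.mk_le_of_le_val (by omega)
  · intro n hnT hn
    simp only [Finset.mem_range] at *
    rw [dif_pos hnT, if_neg]
    intro hle
    simp only [Fin.le_def] at hle
    omega

/-- Concave optimization over a majorization-type polytope: a nonincreasing
probability vector `c` maximizes `d ↦ Σ √(d_t)` over the probability vectors `d`
whose partial sums dominate those of `c`. -/
theorem stmt_15 (T : ℕ) (c : Fin T → ℝ)
    (hc0 : ∀ t, 0 ≤ c t) (hcsum : ∑ t, c t = 1)
    (hmono : ∀ i j : Fin T, i ≤ j → c j ≤ c i)
    (d : Fin T → ℝ) (hd0 : ∀ t, 0 ≤ d t) (hdsum : ∑ t, d t = 1)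
    (hdom : ∀ t : Fin T, ∑ s ∈ Finset.univ.filter (· ≤ t), c s
      ≤ ∑ s ∈ Finset.univ.filter (· ≤ t), d s) :
    ∑ t, Real.sqrt (d t) ≤ ∑ t, Real.sqrt (c t) := by
  classical
  rcases Nat.eq_zero_or_pos T with hT | hT
  · subst hT; simp at hcsum
  set cc : ℕ → ℝ := fun n => if h : n < T then c ⟨n, h⟩ else 0 with hcc
  set dd : ℕ → ℝ := fun n => if h : n < T then d ⟨n, h⟩ else 0 with hdd
  have cc0 : ∀ n, 0 ≤ cc n := by
    intro n; simp only [hcc]; split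
    · exact hc0 _
    · exact le_rfl
  have dd0 : ∀ n, 0 ≤ dd n := by
    intro n; simp only [hdd]; split
    · exact hd0 _
    · exact le_rfl
  have ccmono : ∀ i j : ℕ, i ≤ j → j < T → cc j ≤ cc i := by
    intro i j hij hjT
    have hiT : i < T := lt_of_le_of_lt hij hjT
    simp only [hcc, dif_pos hiT, dif_pos hjT]
    exact hmono ⟨i, hiT⟩ ⟨j, hjT⟩ hij
  have hcsumN : ∑ n ∈ Finset.range T, cc n = 1 := by
    rw [← hcsum, ← Fin.sum_univ_eq_sum_range]
    apply Finset.sum_congr rfl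
    intro i _; simp only [hcc, dif_pos i.2]
  have hdsumN : ∑ n ∈ Finset.range T, dd n = 1 := by
    rw [← hdsum, ← Fin.sum_univ_eq_sum_range]
    apply Finset.sum_congr rfl
    intro i _; simp only [hdd, dif_pos i.2]
  have hdomN : ∀ j, j < T → ∑ n ∈ Finset.range (j + 1), cc n ≤ ∑ n ∈ Finset.range (j + 1), dd n := by
    intro j hj
    have := hdom ⟨j, hj⟩
    rwa [sum_filter_le_eq_range c ⟨j, hj⟩, sum_filter_le_eq_range d ⟨j, hj⟩] at this
  -- define m: first index where cc vanishes (or T)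
  set m : ℕ := if h : ∃ n, n < T ∧ cc n = 0 then Nat.find h else T with hm
  have hmT : m ≤ T := by
    rw [hm]; split
    · next h => exact (Nat.find_spec h).1.le
    · exact le_rfl
  have hpos : ∀ n, n < m → 0 < cc n := by
    intro n hn
    have hnT : n < T := lt_of_lt_of_le hn hmT
    rw [hm] at hn
    have hne : cc n ≠ 0 := by
      split at hn
      · next h => exact fun h0 => (Nat.find_min h hn) ⟨hnT, h0⟩
      · next h => exact fun h0 => h ⟨n, hnT, h0⟩
    exact lt_of_le_of_ne (cc0 n) (Ne.symm hne)
  have hzero : ∀ n, m ≤ n → cc n = 0 := by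
    intro n hn
    by_cases hnT : n < T
    · rw [hm] at hn
      split at hn
      · next h =>
        have hspec := Nat.find_spec h
        have h1 : cc n ≤ cc (Nat.find h) := ccmono _ _ hn hnT
        rw [hspec.2] at h1
        exact le_antisymm h1 (cc0 n)
      · omega
    · simp only [hcc]; rw [dif_neg hnT]
  have hm1 : 0 < m := by
    by_contra h0
    push_neg at h0
    have : ∑ n ∈ Finset.range T, cc n = 0 := by
      apply Finset.sum_eq_zero
      intro n _
      exact hzero n (by omega)
    rw [hcsumN] at this; norm_num at this
  -- partial sums of cc up to m equal 1
  have hccm : ∑ n ∈ Finset.range m, cc n = 1 := by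
    rw [← hcsumN, Finset.sum_subset (Finset.range_subset_range.2 hmT)]
    intro n _ hn
    simp only [Finset.mem_range, not_lt] at hn
    exact hzero n hn
  -- dd vanishes from m on
  have hddm : ∑ n ∈ Finset.range m, dd n = 1 := by
    have h1 : (1:ℝ) ≤ ∑ n ∈ Finset.range m, dd n := by
      have := hdomN (m - 1) (by omega)
      have hrw : m - 1 + 1 = m := by omega
      rw [hrw] at this
      rw [← hccm]; exact this
    have h2 : ∑ n ∈ Finset.range m, dd n ≤ 1 := by
      rw [← hdsumN]
      apply Finset.sum_le_sum_of_subset_of_nonneg (Finset.range_subset_range.2 hmT)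
      intro n _ _; exact dd0 n
    linarith
  have hdzero : ∀ n, m ≤ n → dd n = 0 := by
    intro n hn
    by_cases hnT : n < T
    · have htail : ∑ n ∈ Finset.range T \ Finset.range m, dd n = 0 := by
        have := Finset.sum_sdiff (Finset.range_subset_range.2 hmT) (f := dd)
        rw [hddm, hdsumN] at this
        linarith
      have hmem : n ∈ Finset.range T \ Finset.range m := by
        simp only [Finset.mem_sdiff, Finset.mem_range, not_lt]
        exact ⟨hnT, hn⟩
      have hall := (Finset.sum_eq_zero_iff_of_nonneg (fun i _ => dd0 i)).1 htail
      exact hall n hmem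
    · simp only [hdd, dif_neg hnT]
  -- the weights
  set w : ℕ → ℝ := fun n => (2 * Real.sqrt (cc n))⁻¹ with hw
  have wmono : ∀ i, i + 1 < m → w i ≤ w (i + 1) := by
    intro i hi
    have h1 : 0 < cc (i + 1) := hpos _ hi
    have h2 : cc (i + 1) ≤ cc i := ccmono i (i + 1) (by omega) (by omega)
    have hs1 : 0 < Real.sqrt (cc (i + 1)) := Real.sqrt_pos.2 h1
    have hs2 : Real.sqrt (cc (i + 1)) ≤ Real.sqrt (cc i) := Real.sqrt_le_sqrt h2
    simp only [hw]
    apply inv_anti₀ <;> nlinarith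
  -- main chain
  rw [← sub_nonpos]
  have step1 : ∑ t, Real.sqrt (d t) - ∑ t, Real.sqrt (c t)
      = ∑ n ∈ Finset.range m, (Real.sqrt (dd n) - Real.sqrt (cc n)) := by
    rw [← Finset.sum_sub_distrib]
    rw [show (∑ t, (Real.sqrt (d t) - Real.sqrt (c t)))
        = ∑ n ∈ Finset.range T, (Real.sqrt (dd n) - Real.sqrt (cc n)) by
      rw [← Fin.sum_univ_eq_sum_range (fun n => Real.sqrt (dd n) - Real.sqrt (cc n))]
      apply Finset.sum_congr rfl
      intro i _
      simp only [hcc, hdd, dif_pos i.2]]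
    rw [Finset.sum_subset (Finset.range_subset_range.2 hmT)]
    intro n _ hn
    simp only [Finset.mem_range, not_lt] at hn
    rw [hzero n hn, hdzero n hn]
    simp
  rw [step1]
  have step2 : ∑ n ∈ Finset.range m, (Real.sqrt (dd n) - Real.sqrt (cc n))
      ≤ ∑ n ∈ Finset.range m, w n * (dd n - cc n) := by
    apply Finset.sum_le_sum
    intro n hn
    simp only [Finset.mem_range] at hn
    exact sqrt_tangent_aux (hpos n hn) (dd0 n)
  refine le_trans step2 ?_
  -- Abel summation
  have habel := Finset.sum_range_by_parts w (fun n => dd n - cc n) m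
  simp only [smul_eq_mul] at habel
  rw [habel]
  have hzerosum : ∑ n ∈ Finset.range m, (dd n - cc n) = 0 := by
    rw [Finset.sum_sub_distrib, hddm, hccm]; ring
  rw [hzerosum, mul_zero, zero_sub, neg_nonpos]
  apply Finset.sum_nonneg
  intro i hi
  simp only [Finset.mem_range] at hi
  apply mul_nonneg
  · have := wmono i (by omega)
    linarith
  · have := hdomN i (by omega)
    rw [Finset.sum_sub_distrib]
    linarith
end

section
/- Monotonicity of the limiting multi-period value in information (Theorem 3.3): Let (X,Y) and (X,Z) be Gaussian processes indexed by t = 1,...,T with common real-valued component X. Let F_t = σ((X,Y)_{≤t}) and G_t = σ((X,Z)_{≤t}) (with F_0 = G_0 trivial), and define V_0(X, 𝔽) = E[Σ_t X_t] + φ_0(ε_1) Σ_{t=1}^T (Var(Σ_{u=t}^T X_u | F_{t-1}) - Var(Σ_{u=t}^T X_u | F_t))^{1/2} with φ_0(ε_1) ≥ 0, and analogously V_0(X, 𝔾). If F_t ⊆ G_t for every t and t ↦ Var(Σ_{s=1}^T X_s | F_t) is convex (equivalently, the nonrandom increments Var(Σ X_s|F_{t-1}) - Var(Σ X_s|F_t)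 are nonincreasing in t), then V_0(X, 𝔽) ≥ V_0(X, 𝔾). -/
open MeasureTheory ProbabilityTheory Finset

/-!
The variance increments `c t = Var(Σ X | 𝔽_{t-1}) - Var(Σ X | 𝔽_t)` and `d t` (for `𝔾`) are
nonnegative with the same total `Var(Σ X)`, and `𝔽_t ⊆ 𝔾_t` makes the partial sums of `d` dominate
those of `c` (more information leaves less conditional variance). When `c` is nonincreasing, the
concavity of `√` gives `Σ √d ≤ Σ √c`: bound each `√(d t)` by the tangent line of `√` at `c t`,
whose slope `1 / (2 √(c t))` is nondecreasing in `t`, and sum by parts against the nonnegative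
partial sums of `d - c`.
-/

theorem Real.sqrt_le_sqrt_add_sub_div {a b : ℝ} (ha : 0 < a) (hb : 0 ≤ b) :
    √b ≤ √a + (b - a) / (2 * √a) := by
  have hsa : 0 < √a := Real.sqrt_pos.2 ha
  have hgap : √a + (b - a) / (2 * √a) - √b = (√b - √a) ^ 2 / (2 * √a) := by
    field_simp
    rw [sub_sq, Real.sq_sqrt ha.le, Real.sq_sqrt hb]
    ring
  linarith [show 0 ≤ (√b - √a) ^ 2 / (2 * √a) by positivity]

theorem sum_Icc_sub_pred (f : ℕ → ℝ) (n : ℕ) :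
    ∑ t ∈ Icc 1 n, (f (t - 1) - f t) = f 0 - f n := by
  induction n with
  | zero => simp
  | succ n ih => rw [sum_Icc_succ_top (by omega), ih, Nat.add_sub_cancel]; ring

theorem sum_Icc_mul_le_of_partialSum_nonneg {e w : ℕ → ℝ} {n : ℕ}
    (he : ∀ k < n, 0 ≤ ∑ t ∈ Icc 1 k, e t) (hw : MonotoneOn w (Set.Icc 1 n)) :
    ∑ t ∈ Icc 1 n, e t * w t ≤ (∑ t ∈ Icc 1 n, e t) * w n := by
  induction n with
  | zero => simp
  | succ n ih =>
    rw [sum_Icc_succ_top (by omega), sum_Icc_succ_top (by omega), add_mul]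
    have hprev := ih (fun k hk => he k (by omega)) (hw.mono (Set.Icc_subset_Icc_right (by omega)))
    have hstep : (∑ t ∈ Icc 1 n, e t) * w n ≤ (∑ t ∈ Icc 1 n, e t) * w (n + 1) := by
      rcases n.eq_zero_or_pos with rfl | hn
      · simp
      · exact mul_le_mul_of_nonneg_left
          (hw ⟨hn, by omega⟩ ⟨by omega, le_rfl⟩ (by omega)) (he n (by omega))
    linarith

theorem sum_sqrt_le_sum_sqrt_of_pos {c d : ℕ → ℝ} {n : ℕ}
    (hc : ∀ t ∈ Icc 1 n, 0 < c t) (hc_anti : AntitoneOn c (Set.Icc 1 n))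
    (hd : ∀ t ∈ Icc 1 n, 0 ≤ d t)
    (hpart : ∀ k ≤ n, ∑ t ∈ Icc 1 k, c t ≤ ∑ t ∈ Icc 1 k, d t)
    (htot : ∑ t ∈ Icc 1 n, d t = ∑ t ∈ Icc 1 n, c t) :
    ∑ t ∈ Icc 1 n, √(d t) ≤ ∑ t ∈ Icc 1 n, √(c t) := by
  set w : ℕ → ℝ := fun t => (2 * √(c t))⁻¹
  have hw : MonotoneOn w (Set.Icc 1 n) := fun s hs t ht hst => by
    have hct : 0 < √(c t) := Real.sqrt_pos.2 (hc t (by simpa using ht))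
    exact inv_anti₀ (by positivity) (by gcongr; exact hc_anti hs ht hst)
  have habel : ∑ t ∈ Icc 1 n, (d t - c t) * w t ≤ (∑ t ∈ Icc 1 n, (d t - c t)) * w n :=
    sum_Icc_mul_le_of_partialSum_nonneg
      (fun k hk => by rw [sum_sub_distrib]; linarith [hpart k hk.le]) hw
  calc ∑ t ∈ Icc 1 n, √(d t)
      ≤ ∑ t ∈ Icc 1 n, (√(c t) + (d t - c t) * w t) := sum_le_sum fun t ht => by
        rw [← div_eq_mul_inv]; exact Real.sqrt_le_sqrt_add_sub_div (hc t ht) (hd t ht)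
    _ = ∑ t ∈ Icc 1 n, √(c t) + ∑ t ∈ Icc 1 n, (d t - c t) * w t := sum_add_distrib
    _ ≤ ∑ t ∈ Icc 1 n, √(c t) := by
      rw [sum_sub_distrib, htot, sub_self, zero_mul] at habel; linarith

theorem sum_sqrt_le_sum_sqrt_of_partialSum_le {c d : ℕ → ℝ} {n : ℕ}
    (hc : ∀ t ∈ Icc 1 n, 0 ≤ c t) (hc_anti : AntitoneOn c (Set.Icc 1 n))
    (hd : ∀ t ∈ Icc 1 n, 0 ≤ d t)
    (hpart : ∀ k ≤ n, ∑ t ∈ Icc 1 k, c t ≤ ∑ t ∈ Icc 1 k, d t)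
    (htot : ∑ t ∈ Icc 1 n, d t = ∑ t ∈ Icc 1 n, c t) :
    ∑ t ∈ Icc 1 n, √(d t) ≤ ∑ t ∈ Icc 1 n, √(c t) := by
  induction n with
  | zero => simp
  | succ n ih =>
    have hlast : n + 1 ∈ Icc 1 (n + 1) := by simp
    rcases (hc _ hlast).lt_or_eq with hpos | hzero
    · refine sum_sqrt_le_sum_sqrt_of_pos (fun t ht => hpos.trans_le ?_) hc_anti hd hpart htot
      exact hc_anti (by simpa using ht) (by simp) (mem_Icc.1 ht).2
    -- `c (n + 1) = 0` forces `d (n + 1) = 0`, so the last index can be dropped.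
    have hsub : Icc 1 n ⊆ Icc 1 (n + 1) := Icc_subset_Icc_right n.le_succ
    rw [sum_Icc_succ_top (by omega), sum_Icc_succ_top (by omega), ← hzero, add_zero] at htot
    have hdn : d (n + 1) = 0 :=
      le_antisymm (by linarith [hpart n n.le_succ]) (hd _ hlast)
    rw [sum_Icc_succ_top (by omega), sum_Icc_succ_top (by omega), hdn, ← hzero,
      Real.sqrt_zero, add_zero, add_zero]
    exact ih (fun t ht => hc t (hsub ht)) (hc_anti.mono (Set.Icc_subset_Icc_right n.le_succ))
      (fun t ht => hd t (hsub ht)) (fun k hk => hpart k (by omega)) (by linarith)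

theorem sum_sqrt_sub_pred_le {f g : ℕ → ℝ} {T : ℕ}
    (hf_anti : AntitoneOn f (Set.Iic T)) (hg_anti : AntitoneOn g (Set.Iic T))
    (hgf : ∀ t ≤ T, g t ≤ f t) (h0 : f 0 = g 0) (hT : f T = g T)
    (hconvex : ∀ t, 1 ≤ t → t + 1 ≤ T → f t - f (t + 1) ≤ f (t - 1) - f t) :
    ∑ t ∈ Icc 1 T, √(g (t - 1) - g t) ≤ ∑ t ∈ Icc 1 T, √(f (t - 1) - f t) := by
  have hdecr : ∀ {h : ℕ → ℝ}, AntitoneOn h (Set.Iic T) → ∀ t ∈ Icc 1 T, 0 ≤ h (t - 1) - h t :=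
    fun hh t ht => sub_nonneg.2 <| hh (Set.mem_Iic.2 (by grind)) (Set.mem_Iic.2 (by grind))
      (by omega)
  refine sum_sqrt_le_sum_sqrt_of_partialSum_le (hdecr hf_anti) ?_ (hdecr hg_anti) ?_ ?_
  · refine antitoneOn_of_succ_le Set.ordConnected_Icc fun t _ ht hst => ?_
    simpa using hconvex t ht.1 (by simpa using hst.2)
  · intro k hk
    rw [sum_Icc_sub_pred, sum_Icc_sub_pred]
    linarith [hgf k hk]
  · rw [sum_Icc_sub_pred, sum_Icc_sub_pred, h0, hT]

theorem integral_condVar_anti {Ω : Type*} {m₁ m₂ m₀ : MeasurableSpace Ω} {μ : Measure[m₀] Ω}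
    [IsProbabilityMeasure μ] {X : Ω → ℝ} (h₁₂ : m₁ ≤ m₂) (h₂ : m₂ ≤ m₀) (hX : MemLp X 2 μ) :
    μ[Var[X; μ | m₂]] ≤ μ[Var[X; μ | m₁]] := by
  have h₁ : m₁ ≤ m₀ := h₁₂.trans h₂
  have htot₁ := integral_condVar_add_variance_condExp h₁ hX
  have htot₂ := integral_condVar_add_variance_condExp h₂ hX
  -- the total variance law for `μ[X | m₂]` at level `m₁` shows `Var μ[X | m₁] ≤ Var μ[X | m₂]`
  have htot₂₁ := integral_condVar_add_variance_condExp h₁ (hX.condExp (m := m₂) one_le_two)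
  rw [variance_congr (condExp_condExp_of_le h₁₂ h₂)] at htot₂₁
  have hnonneg : 0 ≤ μ[Var[μ[X | m₂]; μ | m₁]] := by
    rw [condVar, integral_condExp h₁]
    exact integral_nonneg fun ω => sq_nonneg _
  linarith

theorem condVar_eq_zero_of_stronglyMeasurable {Ω : Type*} {m m₀ : MeasurableSpace Ω}
    {μ : Measure[m₀] Ω} {X : Ω → ℝ} (hm : m ≤ m₀) [SigmaFinite (μ.trim hm)]
    (hX : StronglyMeasurable[m] X) (hXi : Integrable X μ) :
    Var[X; μ | m] = 0 := by
  simp [condVar, condExp_of_stronglyMeasurable hm hX hXi]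

theorem integral_eq_of_ae_eq_const {Ω : Type*} [MeasurableSpace Ω] {μ : Measure Ω}
    [IsProbabilityMeasure μ] {f : Ω → ℝ} {v : ℝ} (hf : f =ᵐ[μ] fun _ => v) : μ[f] = v := by
  simp [integral_congr_ae hf]

theorem antitoneOn_of_condVar_ae_eq_const {Ω : Type*} {m₀ : MeasurableSpace Ω}
    {μ : Measure[m₀] Ω} [IsProbabilityMeasure μ] (ℱ : Filtration ℕ m₀) {X : Ω → ℝ}
    (hX : MemLp X 2 μ) {v : ℕ → ℝ} {T : ℕ} (hv : ∀ t ≤ T, Var[X; μ | ℱ t] =ᵐ[μ] fun _ => v t) :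
    AntitoneOn v (Set.Iic T) := fun a ha b hb hab => by
  rw [← integral_eq_of_ae_eq_const (hv a ha), ← integral_eq_of_ae_eq_const (hv b hb)]
  exact integral_condVar_anti (ℱ.mono hab) (ℱ.le b) hX

theorem monotone_biSup_Icc {Ω : Type*} (ℳ : ℕ → MeasurableSpace Ω) :
    Monotone fun t => ⨆ s ∈ Icc 1 t, ℳ s :=
  fun _ _ hab => biSup_mono fun _ hs => Icc_subset_Icc_right hab hs

theorem measurable_sum_biSup_Icc {Ω : Type*} (X : ℕ → Ω → ℝ) (ℳ : ℕ → MeasurableSpace Ω)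
    (T : ℕ) :
    Measurable[⨆ s ∈ Icc 1 T, (MeasurableSpace.comap (X s) inferInstance ⊔ ℳ s)]
      fun ω => ∑ s ∈ Icc 1 T, X s ω :=
  Finset.measurable_sum _ fun s hs => Measurable.of_comap_le (le_iSup₂_of_le s hs le_sup_left)

theorem stmt_16_general {Ω : Type*} (F G : ℕ → MeasurableSpace Ω) [mΩ : MeasurableSpace Ω]
    (P : Measure Ω) [IsProbabilityMeasure P] (T d e : ℕ)
    (X : ℕ → Ω → ℝ) (Y : ℕ → Ω → Fin d → ℝ) (Z : ℕ → Ω → Fin e → ℝ)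
    (hX : ∀ t, Measurable (X t)) (hY : ∀ t, Measurable (Y t)) (hZ : ∀ t, Measurable (Z t))
    (hX2 : ∀ t, MemLp (X t) 2 P)
    -- the filtrations generated by (X, Y) and (X, Z)
    (hF : ∀ t, F t = ⨆ s ∈ Finset.Icc 1 t,
      (MeasurableSpace.comap (X s) inferInstance ⊔ MeasurableSpace.comap (Y s) inferInstance))
    (hG : ∀ t, G t = ⨆ s ∈ Finset.Icc 1 t,
      (MeasurableSpace.comap (X s) inferInstance ⊔ MeasurableSpace.comap (Z s) inferInstance))
    -- F_t ⊆ G_t for every t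
    (hFG : ∀ t, F t ≤ G t)
    -- the (nonrandom) conditional variances of the aggregate cashflow
    (vF vG : ℕ → ℝ)
    (hvF : ∀ t ≤ T,
      (condExp (F t) P fun ω =>
          ((∑ s ∈ Finset.Icc 1 T, X s ω)
            - (condExp (F t) P fun ω' => ∑ s ∈ Finset.Icc 1 T, X s ω') ω) ^ 2)
        =ᵐ[P] fun _ => vF t)
    (hvG : ∀ t ≤ T,
      (condExp (G t) P fun ω =>
          ((∑ s ∈ Finset.Icc 1 T, X s ω)
            - (condExp (G t) P fun ω' => ∑ s ∈ Finset.Icc 1 T, X s ω') ω) ^ 2)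
        =ᵐ[P] fun _ => vG t)
    -- convexity: the variance increments along F are nonincreasing in t
    (hconvex : ∀ t, 1 ≤ t → t + 1 ≤ T → vF t - vF (t + 1) ≤ vF (t - 1) - vF t)
    -- the nonnegative constant φ₀(ε₁)
    (φ₀ : ℝ) (hφ₀ : 0 ≤ φ₀) :
    (∫ ω, ∑ t ∈ Finset.Icc 1 T, X t ω ∂P)
        + φ₀ * ∑ t ∈ Finset.Icc 1 T, Real.sqrt (vG (t - 1) - vG t)
      ≤ (∫ ω, ∑ t ∈ Finset.Icc 1 T, X t ω ∂P)
        + φ₀ * ∑ t ∈ Finset.Icc 1 T, Real.sqrt (vF (t - 1) - vF t) := by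
  set S : Ω → ℝ := fun ω => ∑ t ∈ Icc 1 T, X t ω
  have hS : MemLp S 2 P := memLp_finsetSum _ fun t _ => hX2 t
  let ℱ : Filtration ℕ mΩ := ⟨F, funext hF ▸ monotone_biSup_Icc _,
    fun t => (hF t).trans_le (iSup₂_le fun s _ => sup_le (hX s).comap_le (hY s).comap_le)⟩
  let 𝒢 : Filtration ℕ mΩ := ⟨G, funext hG ▸ monotone_biSup_Icc _,
    fun t => (hG t).trans_le (iSup₂_le fun s _ => sup_le (hX s).comap_le (hZ s).comap_le)⟩
  have hvF' : ∀ t ≤ T, P[Var[S; P | F t]] = vF t :=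
    fun t ht => integral_eq_of_ae_eq_const (hvF t ht)
  have hvG' : ∀ t ≤ T, P[Var[S; P | G t]] = vG t :=
    fun t ht => integral_eq_of_ae_eq_const (hvG t ht)
  have hSF : StronglyMeasurable[F T] S :=
    hF T ▸ (measurable_sum_biSup_Icc X _ T).stronglyMeasurable
  have hSG : StronglyMeasurable[G T] S :=
    hG T ▸ (measurable_sum_biSup_Icc X _ T).stronglyMeasurable
  refine add_le_add_right (mul_le_mul_of_nonneg_left (sum_sqrt_sub_pred_le
    (antitoneOn_of_condVar_ae_eq_const ℱ hS hvF) (antitoneOn_of_condVar_ae_eq_const 𝒢 hS hvG)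
    (fun t ht => ?_) ?_ ?_ hconvex) hφ₀) _
  · rw [← hvF' t ht, ← hvG' t ht]
    exact integral_condVar_anti (hFG t) (𝒢.le t) hS
  · rw [← hvF' 0 (Nat.zero_le T), ← hvG' 0 (Nat.zero_le T), hF 0, hG 0]
    simp
  · rw [← hvF' T le_rfl, ← hvG' T le_rfl,
      condVar_eq_zero_of_stronglyMeasurable (ℱ.le T) hSF (hS.integrable one_le_two),
      condVar_eq_zero_of_stronglyMeasurable (𝒢.le T) hSG (hS.integrable one_le_two)]

/-- Monotonicity of the limiting multi-period value in information: with
`F_t = σ((X,Y)_{≤t}) ⊆ G_t = σ((X,Z)_{≤t})`, both processes jointly Gaussian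
with the cashflow `X`, nonrandom conditional variances
`vF t = Var(Σ X_s | F_t)`, `vG t = Var(Σ X_s | G_t)`, and nonincreasing variance
increments for `F` (convexity), the value computed with the smaller filtration
dominates:
`E[Σ X_t] + φ₀ Σ_t √(vG_{t-1} - vG_t) ≤ E[Σ X_t] + φ₀ Σ_t √(vF_{t-1} - vF_t)`. -/
theorem stmt_16 {Ω : Type*} (F G : ℕ → MeasurableSpace Ω) [mΩ : MeasurableSpace Ω]
    (P : Measure Ω) [IsProbabilityMeasure P] (T d e : ℕ) (hT : 1 ≤ T)
    (X : ℕ → Ω → ℝ) (Y : ℕ → Ω → Fin d → ℝ) (Z : ℕ → Ω → Fin e → ℝ)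
    (hX : ∀ t, Measurable (X t)) (hY : ∀ t, Measurable (Y t)) (hZ : ∀ t, Measurable (Z t))
    (hX2 : ∀ t, MemLp (X t) 2 P)
    -- the filtrations generated by (X, Y) and (X, Z)
    (hF : ∀ t, F t = ⨆ s ∈ Finset.Icc 1 t,
      (MeasurableSpace.comap (X s) inferInstance ⊔ MeasurableSpace.comap (Y s) inferInstance))
    (hG : ∀ t, G t = ⨆ s ∈ Finset.Icc 1 t,
      (MeasurableSpace.comap (X s) inferInstance ⊔ MeasurableSpace.comap (Z s) inferInstance))
    -- (X, Y) and (X, Z) are Gaussian processes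
    (hGaussF : ∀ (u : ℕ → ℝ) (v : ℕ → Fin d → ℝ), ∃ (mean : ℝ) (s : NNReal),
      P.map (fun ω => ∑ t ∈ Finset.Icc 1 T, (u t * X t ω + ∑ i, v t i * Y t ω i))
        = gaussianReal mean s)
    (hGaussG : ∀ (u : ℕ → ℝ) (v : ℕ → Fin e → ℝ), ∃ (mean : ℝ) (s : NNReal),
      P.map (fun ω => ∑ t ∈ Finset.Icc 1 T, (u t * X t ω + ∑ i, v t i * Z t ω i))
        = gaussianReal mean s)
    -- F_t ⊆ G_t for every t
    (hFG : ∀ t, F t ≤ G t)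
    -- the (nonrandom) conditional variances of the aggregate cashflow
    (vF vG : ℕ → ℝ)
    (hvF : ∀ t ≤ T,
      (condExp (F t) P fun ω =>
          ((∑ s ∈ Finset.Icc 1 T, X s ω)
            - (condExp (F t) P fun ω' => ∑ s ∈ Finset.Icc 1 T, X s ω') ω) ^ 2)
        =ᵐ[P] fun _ => vF t)
    (hvG : ∀ t ≤ T,
      (condExp (G t) P fun ω =>
          ((∑ s ∈ Finset.Icc 1 T, X s ω)
            - (condExp (G t) P fun ω' => ∑ s ∈ Finset.Icc 1 T, X s ω') ω) ^ 2)
        =ᵐ[P] fun _ => vG t)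
    -- convexity: the variance increments along F are nonincreasing in t
    (hconvex : ∀ t, 1 ≤ t → t + 1 ≤ T → vF t - vF (t + 1) ≤ vF (t - 1) - vF t)
    -- the nonnegative constant φ₀(ε₁)
    (φ₀ : ℝ) (hφ₀ : 0 ≤ φ₀) :
    (∫ ω, ∑ t ∈ Finset.Icc 1 T, X t ω ∂P)
        + φ₀ * ∑ t ∈ Finset.Icc 1 T, Real.sqrt (vG (t - 1) - vG t)
      ≤ (∫ ω, ∑ t ∈ Finset.Icc 1 T, X t ω ∂P)
        + φ₀ * ∑ t ∈ Finset.Icc 1 T, Real.sqrt (vF (t - 1) - vF t) :=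
  stmt_16_general F G (mΩ := mΩ) P T d e X Y Z hX hY hZ hX2 hF hG hFG vF vG hvF hvG hconvex φ₀ hφ₀
end
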